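/- arXiv:0808.3533 — 3 statements merged into one kernel-verified Lean document; each statement's English description precedes it below -/
import Mathlib

section
/- If Delta = 4AC - B^2 > 0 and A ≠ 0, then x± = (B ± i√Delta)/(2A) are the two (complex conjugate) roots of A x^2 - B x + C = 0, and x(p1-x)(p2-x)(p3-x) = -(x-v1)(x-v2)(x-v3)(x-v4) holds at x = x±. -/
open Complex

/-! The quartic `x (p₁ - x)(p₂ - x)(p₃ - x) + (x - v₁)(x - v₂)(x - v₃)(x - v₄)` loses its `x⁴` term
for any `p`, `v`, and its `x³` term because `p₁ + p₂ + p₃ = v₁ + v₂ + v₃ + v₄ = 2 ∑ jᵢ`. It is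
therefore the quadratic `A x² - B x + C`, whose roots for `4AC - B² > 0` are the conjugate pair
`(B ± i√(4AC - B²)) / (2A)` by the quadratic formula. -/

theorem quadratic_eq_zero_of_eq_conj_root {a b c : ℝ} (ha : a ≠ 0) (hd : 0 ≤ 4 * a * c - b ^ 2)
    {x : ℂ} (hx : x = (b + I * √(4 * a * c - b ^ 2)) / (2 * a) ∨
      x = (b - I * √(4 * a * c - b ^ 2)) / (2 * a)) :
    a * x ^ 2 - b * x + c = 0 := by
  have hdiscrim :
      discrim (a : ℂ) (-b) c = (I * √(4 * a * c - b ^ 2)) * (I * √(4 * a * c - b ^ 2)) := by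
    have hsqrt : ((√(4 * a * c - b ^ 2) : ℝ) : ℂ) ^ 2 = 4 * a * c - b ^ 2 := by
      exact_mod_cast Real.sq_sqrt hd
    rw [discrim]
    linear_combination (-I ^ 2) * hsqrt - (4 * a * c - b ^ 2 : ℂ) * I_sq
  have hroot := (quadratic_eq_zero_iff (by exact_mod_cast ha) hdiscrim x).2 (by simpa using hx)
  linear_combination hroot

theorem mul_sub_mul_sub_mul_sub_add_prod_sub {R : Type*} [CommRing R]
    {p₁ p₂ p₃ v₁ v₂ v₃ v₄ a b c : R} (hsum : p₁ + p₂ + p₃ = v₁ + v₂ + v₃ + v₄)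
    (ha : a = -(p₁ * p₂ + p₁ * p₃ + p₂ * p₃) +
      (v₁ * v₂ + v₁ * v₃ + v₁ * v₄ + v₂ * v₃ + v₂ * v₄ + v₃ * v₄))
    (hb : b = -(p₁ * p₂ * p₃) + (v₁ * v₂ * v₃ + v₁ * v₂ * v₄ + v₁ * v₃ * v₄ + v₂ * v₃ * v₄))
    (hc : c = v₁ * v₂ * v₃ * v₄) (x : R) :
    x * (p₁ - x) * (p₂ - x) * (p₃ - x) + (x - v₁) * (x - v₂) * (x - v₃) * (x - v₄) =
      a * x ^ 2 - b * x + c := by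
  linear_combination x ^ 3 * hsum - x ^ 2 * ha + x * hb - hc

theorem complex_saddle_points
    (j1 j2 j3 J1 J2 J3 v1 v2 v3 v4 p1 p2 p3 A B C Δ : ℝ)
    (hv1 : v1 = j1 + j2 + j3) (hv2 : v2 = J1 + j2 + J3)
    (hv3 : v3 = J1 + J2 + j3) (hv4 : v4 = j1 + J2 + J3)
    (hp1 : p1 = j2 + J2 + j3 + J3) (hp2 : p2 = j1 + J1 + j3 + J3)
    (hp3 : p3 = j2 + J2 + j1 + J1)
    (hA : A = -(p1*p2 + p1*p3 + p2*p3) + (v1*v2 + v1*v3 + v1*v4 + v2*v3 + v2*v4 + v3*v4))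
    (hB : B = -(p1*p2*p3) + (v1*v2*v3 + v1*v2*v4 + v1*v3*v4 + v2*v3*v4))
    (hC : C = v1*v2*v3*v4)
    (hΔ : Δ = 4*A*C - B^2) (hΔpos : 0 < Δ) (hA0 : A ≠ 0) :
    ∀ x : ℂ, (x = ((B : ℂ) + I * Real.sqrt Δ) / (2 * A) ∨
              x = ((B : ℂ) - I * Real.sqrt Δ) / (2 * A)) →
      (A * x^2 - B * x + C = 0 ∧
       x * ((p1 : ℂ) - x) * ((p2 : ℂ) - x) * ((p3 : ℂ) - x)
         = -((x - v1) * (x - v2) * (x - v3) * (x - v4))) := by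
  intro x hx
  subst hΔ
  have hroot := quadratic_eq_zero_of_eq_conj_root hA0 hΔpos.le hx
  refine ⟨hroot, ?_⟩
  have hsum : p1 + p2 + p3 = v1 + v2 + v3 + v4 := by
    rw [hv1, hv2, hv3, hv4, hp1, hp2, hp3]; ring
  exact eq_neg_of_add_eq_zero_left <| (mul_sub_mul_sub_mul_sub_add_prod_sub
    (by exact_mod_cast hsum) (by exact_mod_cast hA) (by exact_mod_cast hB) (by exact_mod_cast hC)
    x).trans hroot
end

section
/- With the vᵢ, pⱼ, A, B, C as in the Racah 6j setup, the following identity of real numbers holds: (A v1² - B v1 + C)(A v4² - B v4 + C) / ((A p2² - B p2 + C)(A p3² - B p3 + C)) = (j1+J2+J3)(-j1+J2+J3)(j1+j2+j3)(-j1+j2+j3) / ((j1+J2-J3)(j1-J2+J3)(j1+j2-j3)(j1-j2+j3)), provided all denominators are nonzero. -/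
/-!
Since `v1 + v2 + v3 + v4 = p1 + p2 + p3`, the quadratic `Q x = A x² - B x + C` is the difference
`∏ᵢ (x - vᵢ) - x ∏ₖ (x - pₖ)`, in which the quartic and cubic terms cancel. Hence `Q vᵢ = -vᵢ ∏ₖ (vᵢ - pₖ)`
and `Q pₖ = ∏ᵢ (pₖ - vᵢ)` split into linear factors, and after cross-cancelling the common factor
`(J1+J3-j2)(J1+J2-j3)(J1+j3-J2)(J1+j2-J3)` of `Q v1 Q v4` and `Q p2 Q p3` only the stated ratio is left.
-/

theorem prod_sub_sub_mul_prod_sub_of_sum_eq {R : Type*} [CommRing R] {v1 v2 v3 v4 p1 p2 p3 : R}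
    (h : v1 + v2 + v3 + v4 = p1 + p2 + p3) (x : R) :
    (x - v1) * (x - v2) * (x - v3) * (x - v4) - x * ((x - p1) * (x - p2) * (x - p3)) =
      ((v1*v2 + v1*v3 + v1*v4 + v2*v3 + v2*v4 + v3*v4) - (p1*p2 + p1*p3 + p2*p3)) * x ^ 2
        - ((v1*v2*v3 + v1*v2*v4 + v1*v3*v4 + v2*v3*v4) - p1*p2*p3) * x + v1*v2*v3*v4 := by
  linear_combination (-x ^ 3) * h

theorem real_part_cancellation_general
    (j1 j2 j3 J1 J2 J3 v1 v2 v3 v4 p1 p2 p3 A B C : ℝ)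
    (hv1 : v1 = j1 + j2 + j3) (hv2 : v2 = J1 + j2 + J3)
    (hv3 : v3 = J1 + J2 + j3) (hv4 : v4 = j1 + J2 + J3)
    (hp1 : p1 = j2 + J2 + j3 + J3) (hp2 : p2 = j1 + J1 + j3 + J3)
    (hp3 : p3 = j2 + J2 + j1 + J1)
    (hA : A = (v1*v2 + v1*v3 + v1*v4 + v2*v3 + v2*v4 + v3*v4) - (p1*p2 + p1*p3 + p2*p3))
    (hB : B = (v1*v2*v3 + v1*v2*v4 + v1*v3*v4 + v2*v3*v4) - p1*p2*p3)
    (hC : C = v1*v2*v3*v4)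
    (hden1 : (A*p2^2 - B*p2 + C) * (A*p3^2 - B*p3 + C) ≠ 0) :
    (A*v1^2 - B*v1 + C) * (A*v4^2 - B*v4 + C)
      / ((A*p2^2 - B*p2 + C) * (A*p3^2 - B*p3 + C))
    = (j1+J2+J3)*(-j1+J2+J3)*(j1+j2+j3)*(-j1+j2+j3)
      / ((j1+J2-J3)*(j1-J2+J3)*(j1+j2-j3)*(j1-j2+j3)) := by
  have hsum : v1 + v2 + v3 + v4 = p1 + p2 + p3 := by subst_vars; ring
  have hQ (x : ℝ) : A*x^2 - B*x + C =
      (x - v1) * (x - v2) * (x - v3) * (x - v4) - x * ((x - p1) * (x - p2) * (x - p3)) := by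
    rw [hA, hB, hC, prod_sub_sub_mul_prod_sub_of_sum_eq hsum]
  set K := (J1+J3-j2) * (J1+J2-j3) * (J1+j3-J2) * (J1+j2-J3)
  have hnum : (A*v1^2 - B*v1 + C) * (A*v4^2 - B*v4 + C) =
      K * ((j1+J2+J3)*(-j1+J2+J3)*(j1+j2+j3)*(-j1+j2+j3)) := by
    rw [hQ, hQ]; subst hv1 hv2 hv3 hv4 hp1 hp2 hp3; ring
  have hden : (A*p2^2 - B*p2 + C) * (A*p3^2 - B*p3 + C) =
      K * ((j1+J2-J3)*(j1-J2+J3)*(j1+j2-j3)*(j1-j2+j3)) := by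
    rw [hQ, hQ]; subst hv1 hv2 hv3 hv4 hp1 hp2 hp3; ring
  rw [hden] at hden1
  rw [hnum, hden, mul_div_mul_left _ _ (left_ne_zero_of_mul hden1)]

theorem real_part_cancellation
    (j1 j2 j3 J1 J2 J3 v1 v2 v3 v4 p1 p2 p3 A B C : ℝ)
    (hv1 : v1 = j1 + j2 + j3) (hv2 : v2 = J1 + j2 + J3)
    (hv3 : v3 = J1 + J2 + j3) (hv4 : v4 = j1 + J2 + J3)
    (hp1 : p1 = j2 + J2 + j3 + J3) (hp2 : p2 = j1 + J1 + j3 + J3)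
    (hp3 : p3 = j2 + J2 + j1 + J1)
    (hA : A = (v1*v2 + v1*v3 + v1*v4 + v2*v3 + v2*v4 + v3*v4) - (p1*p2 + p1*p3 + p2*p3))
    (hB : B = (v1*v2*v3 + v1*v2*v4 + v1*v3*v4 + v2*v3*v4) - p1*p2*p3)
    (hC : C = v1*v2*v3*v4)
    (hden1 : (A*p2^2 - B*p2 + C) * (A*p3^2 - B*p3 + C) ≠ 0)
    (hden2 : (j1+J2-J3)*(j1-J2+J3)*(j1+j2-j3)*(j1-j2+j3) ≠ 0) :
    (A*v1^2 - B*v1 + C) * (A*v4^2 - B*v4 + C)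
      / ((A*p2^2 - B*p2 + C) * (A*p3^2 - B*p3 + C))
    = (j1+J2+J3)*(-j1+J2+J3)*(j1+j2+j3)*(-j1+j2+j3)
      / ((j1+J2-J3)*(j1-J2+J3)*(j1+j2-j3)*(j1-j2+j3)) :=
  real_part_cancellation_general j1 j2 j3 J1 J2 J3 v1 v2 v3 v4 p1 p2 p3 A B C hv1 hv2 hv3 hv4 hp1
    hp2 hp3 hA hB hC hden1
end

section
/- The triangle-coefficient asymptotics: for fixed positive reals j1, j2, j3 satisfying the strict triangle inequalities, as k → ∞ through integers, Δ(kj1,kj2,kj3) := (kj1+kj2-kj3)!(kj1-kj2+kj3)!(-kj1+kj2+kj3)! / (kj1+kj2+kj3+1)! is asymptotic to 2π · [(j1+j2-j3)(j1-j2+j3)(-j1+j2+j3)/(j1+j2+j3)³]^{1/2} · e^{k[(j1+j2-j3)ln(j1+j2-j3)+(j1-j2+j3)ln(j1-j2+j3)+(-j1+j2+j3)ln(-j1+j2+j3)-(j1+j2+j3)ln(j1+j2+j3)]}, i.e., the ratio of the two sides tends to 1. -/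
/-!
Stirling's formula `n! ~ √(2πn) e^{n log n - n}` is applied to the three factorials of the
numerator and, through `(D + 1)! = (D + 1) D! ~ D · D!`, to the denominator, where `D = A + B + C`.
Because `A + B + C = D`, the linear terms `-A - B - C + D` in the exponent cancel, and because
`A, B, C, D` are the multiples `k t₁, k t₂, k t₃, k T`, so do the terms in `log k`; the square
roots combine to `2π k T √(t₁ t₂ t₃ / T³)`, and the factor `k T = D` cancels the extra `D`.
-/

open Filter Real Asymptotics
open scoped Nat

noncomputable def stirlingApprox (x : ℝ) : ℝ := √(2 * x * π) * exp (x * log x - x)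

lemma div_exp_one_pow_eq_exp (n : ℕ) : ((n : ℝ) / exp 1) ^ n = exp (n * log n - n) := by
  rcases n.eq_zero_or_pos with rfl | hn
  · simp
  · rw [← exp_log (by positivity : (0 : ℝ) < n / exp 1), ← exp_nat_mul,
      log_div (by positivity) (exp_ne_zero 1), log_exp, mul_sub, mul_one]

lemma factorial_isEquivalent_stirlingApprox :
    (fun n : ℕ ↦ (n ! : ℝ)) ~[atTop] fun n ↦ stirlingApprox n := by
  simpa only [stirlingApprox, div_exp_one_pow_eq_exp] using
    Stirling.factorial_isEquivalent_stirling

lemma factorial_succ_isEquivalent_stirlingApprox :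
    (fun n : ℕ ↦ ((n + 1)! : ℝ)) ~[atTop] fun n ↦ n * stirlingApprox n := by
  have hone : (fun _ : ℕ ↦ (1 : ℝ)) =o[atTop] fun n ↦ (n : ℝ) :=
    (isLittleO_one_left_iff ℝ).mpr (by simpa using tendsto_natCast_atTop_atTop)
  have hsucc : (fun n : ℕ ↦ (n : ℝ) + 1) ~[atTop] fun n ↦ (n : ℝ) :=
    IsEquivalent.refl.add_isLittleO hone
  simpa only [Nat.factorial_succ, Nat.cast_mul, Nat.cast_add_one, Pi.mul_def] using
    hsucc.mul factorial_isEquivalent_stirlingApprox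

lemma stirlingApprox_mul_stirlingApprox_mul_stirlingApprox_div {K t₁ t₂ t₃ : ℝ} (hK : 0 < K)
    (h₁ : 0 < t₁) (h₂ : 0 < t₂) (h₃ : 0 < t₃) :
    stirlingApprox (K * t₁) * stirlingApprox (K * t₂) * stirlingApprox (K * t₃)
        / (K * (t₁ + t₂ + t₃) * stirlingApprox (K * (t₁ + t₂ + t₃)))
      = 2 * π * √(t₁ * t₂ * t₃ / (t₁ + t₂ + t₃) ^ 3)
        * exp (K * (t₁ * log t₁ + t₂ * log t₂ + t₃ * log t₃
          - (t₁ + t₂ + t₃) * log (t₁ + t₂ + t₃))) := by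
  set T := t₁ + t₂ + t₃ with hT
  have hT0 : 0 < T := by positivity
  have hsqrt : √(2 * (K * t₁) * π) * √(2 * (K * t₂) * π) * √(2 * (K * t₃) * π)
      = K * T * √(2 * (K * T) * π) * (2 * π * √(t₁ * t₂ * t₃ / T ^ 3)) := by
    have hrhs : 0 ≤ K * T * √(2 * (K * T) * π) * (2 * π * √(t₁ * t₂ * t₃ / T ^ 3)) := by
      positivity
    rw [← sqrt_mul (by positivity), ← sqrt_mul (by positivity), eq_comm, ← sqrt_sq hrhs]
    congr 1
    simp only [mul_pow]
    rw [sq_sqrt (by positivity), sq_sqrt (by positivity)]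
    field_simp
  have hexp : (K * t₁) * log (K * t₁) - K * t₁ + ((K * t₂) * log (K * t₂) - K * t₂)
      + ((K * t₃) * log (K * t₃) - K * t₃)
      = (K * T) * log (K * T) - K * T
        + K * (t₁ * log t₁ + t₂ * log t₂ + t₃ * log t₃ - T * log T) := by
    rw [log_mul hK.ne' h₁.ne', log_mul hK.ne' h₂.ne', log_mul hK.ne' h₃.ne',
      log_mul hK.ne' hT0.ne', hT]
    ring
  have hS : 0 < stirlingApprox (K * T) := by unfold stirlingApprox; positivity
  rw [div_eq_iff (by positivity)]
  unfold stirlingApprox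
  calc _ = √(2 * (K * t₁) * π) * √(2 * (K * t₂) * π) * √(2 * (K * t₃) * π)
        * exp ((K * t₁) * log (K * t₁) - K * t₁ + ((K * t₂) * log (K * t₂) - K * t₂)
          + ((K * t₃) * log (K * t₃) - K * t₃)) := by rw [exp_add, exp_add]; ring
    _ = _ := by rw [hsqrt, hexp, exp_add]; ring

lemma tendsto_atTop_of_natCast_eq_mul {ι : Type*} {l : Filter ι} {K : ι → ℝ} {A : ι → ℕ} {t : ℝ}
    (hK : Tendsto K l atTop) (ht : 0 < t) (hA : ∀ i, (A i : ℝ) = K i * t) :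
    Tendsto A l atTop :=
  tendsto_natCast_atTop_iff.mp ((hK.atTop_mul_const ht).congr fun i ↦ (hA i).symm)

theorem isEquivalent_factorial_mul_factorial_mul_factorial_div {ι : Type*} {l : Filter ι}
    {K : ι → ℝ} (hK : Tendsto K l atTop) {t₁ t₂ t₃ T : ℝ} (h₁ : 0 < t₁) (h₂ : 0 < t₂)
    (h₃ : 0 < t₃) (hT : t₁ + t₂ + t₃ = T) {A B C D : ι → ℕ} (hA : ∀ i, (A i : ℝ) = K i * t₁)
    (hB : ∀ i, (B i : ℝ) = K i * t₂) (hC : ∀ i, (C i : ℝ) = K i * t₃)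
    (hD : ∀ i, (D i : ℝ) = K i * T) :
    (fun i ↦ ((A i)! * (B i)! * (C i)! : ℝ) / ((D i + 1)! : ℝ)) ~[l]
      fun i ↦ 2 * π * √(t₁ * t₂ * t₃ / T ^ 3)
        * exp (K i * (t₁ * log t₁ + t₂ * log t₂ + t₃ * log t₃ - T * log T)) := by
  subst hT
  have stirling {M : ι → ℕ} {t : ℝ} (ht : 0 < t) (hM : ∀ i, (M i : ℝ) = K i * t) :=
    factorial_isEquivalent_stirlingApprox.comp_tendsto (tendsto_atTop_of_natCast_eq_mul hK ht hM)
  have hstirling := (((stirling h₁ hA).mul (stirling h₂ hB)).mul (stirling h₃ hC)).div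
    (factorial_succ_isEquivalent_stirlingApprox.comp_tendsto
      (tendsto_atTop_of_natCast_eq_mul hK (by positivity) hD))
  refine hstirling.congr_right ?_
  filter_upwards [hK.eventually_gt_atTop 0] with i hKi
  simp only [Function.comp_apply, Pi.mul_apply, Pi.div_apply]
  rw [hA, hB, hC, hD]
  exact stirlingApprox_mul_stirlingApprox_mul_stirlingApprox_div hKi h₁ h₂ h₃

lemma natCast_add_sub_eq_mul {x y z : ℕ} {K u v w : ℝ} (hK : 0 ≤ K) (h : w < u + v)
    (hx : (x : ℝ) = K * u) (hy : (y : ℝ) = K * v) (hz : (z : ℝ) = K * w) :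
    ((x + y - z : ℕ) : ℝ) = K * (u + v - w) := by
  have hzxy : z ≤ x + y := by
    exact_mod_cast (show (z : ℝ) ≤ x + y by rw [hx, hy, hz]; nlinarith)
  rw [Nat.cast_sub hzxy, Nat.cast_add, hx, hy, hz]
  ring

theorem triangle_coefficient_asymptotics_general
    (j1 j2 j3 : ℝ)
    (ht1 : j3 < j1 + j2) (ht2 : j2 < j1 + j3) (ht3 : j1 < j2 + j3)
    (k : ℕ → ℕ) (hk : Tendsto k atTop atTop)
    (a b c : ℕ → ℕ)
    (ha : ∀ n, (a n : ℝ) = (k n : ℝ) * j1)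
    (hb : ∀ n, (b n : ℝ) = (k n : ℝ) * j2)
    (hc : ∀ n, (c n : ℝ) = (k n : ℝ) * j3) :
    Tendsto (fun n =>
      (((a n + b n - c n).factorial * (a n + c n - b n).factorial
          * (b n + c n - a n).factorial : ℝ)
        / ((a n + b n + c n + 1).factorial : ℝ))
      / (2 * π * Real.sqrt ((j1+j2-j3)*(j1-j2+j3)*(-j1+j2+j3) / (j1+j2+j3)^3)
        * Real.exp ((k n : ℝ) *
            ((j1+j2-j3) * Real.log (j1+j2-j3) + (j1-j2+j3) * Real.log (j1-j2+j3)
              + (-j1+j2+j3) * Real.log (-j1+j2+j3)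
              - (j1+j2+j3) * Real.log (j1+j2+j3)))))
      atTop (nhds 1) := by
  have hk0 (n : ℕ) : (0 : ℝ) ≤ k n := Nat.cast_nonneg _
  have h₁ : 0 < j1 + j2 - j3 := by linarith
  have h₂ : 0 < j1 - j2 + j3 := by linarith
  have h₃ : 0 < -j1 + j2 + j3 := by linarith
  have hT : 0 < j1 + j2 + j3 := by linarith
  have hequiv := isEquivalent_factorial_mul_factorial_mul_factorial_div
    (K := fun n ↦ (k n : ℝ)) (T := j1 + j2 + j3) (D := fun n ↦ a n + b n + c n)
    (tendsto_natCast_atTop_atTop.comp hk) h₁ h₂ h₃ (by ring)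
    (fun n ↦ natCast_add_sub_eq_mul (hk0 n) ht1 (ha n) (hb n) (hc n))
    (fun n ↦ (natCast_add_sub_eq_mul (hk0 n) ht2 (ha n) (hc n) (hb n)).trans (by ring))
    (fun n ↦ (natCast_add_sub_eq_mul (hk0 n) ht3 (hb n) (hc n) (ha n)).trans (by ring))
    (fun n ↦ by push_cast; rw [ha, hb, hc]; ring)
  exact (isEquivalent_iff_tendsto_one (Eventually.of_forall fun n ↦ by positivity)).mp hequiv

theorem triangle_coefficient_asymptotics
    (j1 j2 j3 : ℝ) (hj1 : 0 < j1) (hj2 : 0 < j2) (hj3 : 0 < j3)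
    (ht1 : j3 < j1 + j2) (ht2 : j2 < j1 + j3) (ht3 : j1 < j2 + j3)
    (k : ℕ → ℕ) (hk : Tendsto k atTop atTop)
    (a b c : ℕ → ℕ)
    (ha : ∀ n, (a n : ℝ) = (k n : ℝ) * j1)
    (hb : ∀ n, (b n : ℝ) = (k n : ℝ) * j2)
    (hc : ∀ n, (c n : ℝ) = (k n : ℝ) * j3) :
    Tendsto (fun n =>
      (((a n + b n - c n).factorial * (a n + c n - b n).factorial
          * (b n + c n - a n).factorial : ℝ)
        / ((a n + b n + c n + 1).factorial : ℝ))
      / (2 * π * Real.sqrt ((j1+j2-j3)*(j1-j2+j3)*(-j1+j2+j3) / (j1+j2+j3)^3)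
        * Real.exp ((k n : ℝ) *
            ((j1+j2-j3) * Real.log (j1+j2-j3) + (j1-j2+j3) * Real.log (j1-j2+j3)
              + (-j1+j2+j3) * Real.log (-j1+j2+j3)
              - (j1+j2+j3) * Real.log (j1+j2+j3)))))
      atTop (nhds 1) :=
  triangle_coefficient_asymptotics_general j1 j2 j3 ht1 ht2 ht3 k hk a b c ha hb hc
end
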